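/- For any tree T of order n ≥ 4, γ_tc(M(T)) ≠ 2n − 3. -/

import Mathlib

open SimpleGraph

/-- The middle graph `M(G)`: vertices are `V(G) ⊕ E(G)`; an edge-vertex is adjacent to
another edge-vertex iff the edges are distinct and share an endpoint, and a vertex is
adjacent to an edge iff it is incident to it. -/
def middleGraph {V : Type*} (G : SimpleGraph V) : SimpleGraph (V ⊕ G.edgeSet) where
  Adj x y :=
    match x, y with
    | Sum.inl _, Sum.inl _ => False
    | Sum.inl v, Sum.inr e => v ∈ (e : Sym2 V)
    | Sum.inr e, Sum.inl v => v ∈ (e : Sym2 V)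
    | Sum.inr e, Sum.inr f => e ≠ f ∧ ∃ v, v ∈ (e : Sym2 V) ∧ v ∈ (f : Sym2 V)
  symm := by
    constructor
    rintro (v|e) (w|f) h
    · exact h
    · exact h
    · exact h
    · exact ⟨h.1.symm, h.2.imp fun v hv => ⟨hv.2, hv.1⟩⟩
  loopless := by
    constructor
    rintro (v|e) h
    · exact h
    · exact h.1 rfl

/-- `D` is a total dominating set of `G`: every vertex has a neighbour in `D`. -/
def IsTotalDomSet {V : Type*} (G : SimpleGraph V) (D : Set V) : Prop :=
  ∀ v : V, ∃ u ∈ D, G.Adj v u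

/-- `D` is a total outer-connected dominating set of `G`: it is total dominating and
the subgraph induced on the complement of `D` is connected. -/
def IsTOCDomSet {V : Type*} (G : SimpleGraph V) (D : Set V) : Prop :=
  IsTotalDomSet G D ∧ (G.induce Dᶜ).Connected

/-- The total domination number `γₜ(G)`. -/
noncomputable def totalDomNum {V : Type*} (G : SimpleGraph V) : ℕ :=
  sInf {k | ∃ D : Set V, IsTotalDomSet G D ∧ D.ncard = k}

/-- The total outer-connected domination number `γ_tc(G)`. -/
noncomputable def tocDomNum {V : Type*} (G : SimpleGraph V) : ℕ :=
  sInf {k | ∃ D : Set V, IsTOCDomSet G D ∧ D.ncard = k}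

/-- The set of leaves (vertices of degree 1) of `G`. -/
def leafSet {V : Type*} (G : SimpleGraph V) : Set V :=
  {v | ∃ u, G.neighborSet v = {u}}

/-- The wheel graph with hub `none` and rim cycle on `Fin n`. -/
def wheelGraph (n : ℕ) : SimpleGraph (Option (Fin n)) where
  Adj x y :=
    match x, y with
    | none, none => False
    | none, some _ => True
    | some _, none => True
    | some i, some j => (SimpleGraph.cycleGraph n).Adj i j
  symm := by
    constructor
    rintro (_|i) (_|j) h
    · exact h
    · exact h
    · exact h
    · exact (SimpleGraph.cycleGraph n).adj_symm h
  loopless := by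
    constructor
    rintro (_|i) h
    · exact h
    · exact (SimpleGraph.cycleGraph n).loopless.irrefl i h

/-- The corona `G ∘ K₁`: to each vertex `a` of `G` (copy `Sum.inl a`) a pendant
vertex `Sum.inr a` is attached. -/
def corona {V : Type*} (G : SimpleGraph V) : SimpleGraph (V ⊕ V) where
  Adj x y :=
    match x, y with
    | Sum.inl a, Sum.inl b => G.Adj a b
    | Sum.inl a, Sum.inr b => a = b
    | Sum.inr a, Sum.inl b => a = b
    | Sum.inr _, Sum.inr _ => False
  symm := by
    constructor
    rintro (a|a) (b|b) h
    · exact G.adj_symm h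
    · exact h.symm
    · exact h.symm
    · exact h
  loopless := by
    constructor
    rintro (a|a) h
    · exact G.loopless.irrefl a h
    · exact h

/-- The 2-corona `G ∘ P₂`: to each vertex `a` of `G` (copy `Sum.inl a`) a path
`Sum.inl a — Sum.inr (Sum.inl a) — Sum.inr (Sum.inr a)` of length 2 is attached. -/
def corona2 {V : Type*} (G : SimpleGraph V) : SimpleGraph (V ⊕ V ⊕ V) where
  Adj x y :=
    match x, y with
    | Sum.inl a, Sum.inl b => G.Adj a b
    | Sum.inl a, Sum.inr (Sum.inl b) => a = b
    | Sum.inr (Sum.inl a), Sum.inl b => a = b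
    | Sum.inr (Sum.inl a), Sum.inr (Sum.inr b) => a = b
    | Sum.inr (Sum.inr a), Sum.inr (Sum.inl b) => a = b
    | _, _ => False
  symm := by
    constructor
    rintro (a|a|a) (b|b|b) h <;> first | exact G.adj_symm h | exact h.symm | exact h
  loopless := by
    constructor
    rintro (a|a|a) h
    · exact G.loopless.irrefl a h
    · exact h
    · exact h

/-- The spider `S_{1,n,n}`: hub `none`, middle vertices `some (.inl i)`,
leaves `some (.inr i)`; the star `K_{1,n}` with every edge subdivided once. -/
def spiderGraph (n : ℕ) : SimpleGraph (Option (Fin n ⊕ Fin n)) where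
  Adj x y :=
    match x, y with
    | none, some (Sum.inl _) => True
    | some (Sum.inl _), none => True
    | some (Sum.inl i), some (Sum.inr j) => i = j
    | some (Sum.inr i), some (Sum.inl j) => i = j
    | _, _ => False
  symm := by
    constructor
    rintro (_|i|i) (_|j|j) h <;> first | exact h.symm | exact h
  loopless := by
    constructor
    rintro (_|i|i) h <;> exact h

/-- The friendship graph `Fₙ`: `n` triangles sharing the common vertex `none`. -/
def friendshipGraph (n : ℕ) : SimpleGraph (Option (Fin n × Fin 2)) where
  Adj x y :=
    match x, y with
    | none, some _ => True
    | some _, none => True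
    | some (i, a), some (j, b) => i = j ∧ a ≠ b
    | none, none => False
  symm := by
    constructor
    rintro (_|⟨i,a⟩) (_|⟨j,b⟩) h <;> first | exact ⟨h.1.symm, h.2.symm⟩ | exact h
  loopless := by
    constructor
    rintro (_|⟨i,a⟩) h
    · exact h
    · exact h.2 rfl


/-! `M(T)` has `2n - 1` vertices, so `γ_tc(M(T)) = 2n - 3` would mean that a minimum total
outer-connected dominating set misses exactly two vertices. If some edge `uw` is such that every
vertex of `T` lies on an edge other than `uw`, then removing the path `u, uw, w` of `M(T)` leaves
such a set of size `2n - 4`. Otherwise every edge `e` has an endpoint lying on no other edge; that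
endpoint is dominated only by `e`, so every total dominating set contains all edge-vertices, and its
complement, an independent set of vertex-vertices, is connected only if it has at most one element.
-/

open Sum

theorem tocDomNum_le_ncard {W : Type*} {H : SimpleGraph W} {D : Set W} (hD : IsTOCDomSet H D) :
    tocDomNum H ≤ D.ncard :=
  Nat.sInf_le ⟨D, hD, rfl⟩

theorem exists_isTOCDomSet_ncard_eq_tocDomNum {W : Type*} {H : SimpleGraph W}
    (h : 0 < tocDomNum H) : ∃ D, IsTOCDomSet H D ∧ D.ncard = tocDomNum H :=
  Nat.sInf_mem (Nat.nonempty_of_pos_sInf h)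

section middleGraph

variable {V : Type*} {G : SimpleGraph V}

@[simp]
theorem middleGraph_not_adj_inl_inl {v w : V} : ¬(middleGraph G).Adj (inl v) (inl w) :=
  id

@[simp]
theorem middleGraph_adj_inr_inr {e f : G.edgeSet} :
    (middleGraph G).Adj (inr e) (inr f) ↔
      e ≠ f ∧ ∃ v, v ∈ (e : Sym2 V) ∧ v ∈ (f : Sym2 V) :=
  Iff.rfl

theorem connected_induce_middleGraph_edge {u w : V} (huw : G.Adj u w) :
    ((middleGraph G).induce {inl u, inl w, inr ⟨s(u, w), huw⟩}).Connected := by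
  set e : V ⊕ G.edgeSet := inr ⟨s(u, w), huw⟩
  have he : e ∈ ({inl u, inl w, e} : Set _) := by simp
  have hreach : ∀ z, ((middleGraph G).induce {inl u, inl w, e}).Reachable z ⟨e, he⟩ := by
    rintro ⟨z, rfl | rfl | rfl⟩
    · exact Adj.reachable (Sym2.mem_mk_left u w)
    · exact Adj.reachable (Sym2.mem_mk_right u w)
    · rfl
  exact Connected.mk fun x y => (hreach x).trans (hreach y).symm

theorem isTotalDomSet_middleGraph_compl_edge {u w : V} (huw : G.Adj u w)
    (hother : ∀ v, ∃ x, G.Adj v x ∧ s(v, x) ≠ s(u, w)) :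
    IsTotalDomSet (middleGraph G) {inl u, inl w, inr ⟨s(u, w), huw⟩}ᶜ := by
  rintro (v | ⟨f, hf⟩)
  · obtain ⟨x, hvx, hne⟩ := hother v
    exact ⟨inr ⟨s(v, x), hvx⟩, by simp [Subtype.ext_iff, hne], Sym2.mem_mk_left v x⟩
  · induction f using Sym2.ind with
    | _ a b =>
    by_cases hfe : s(a, b) = s(u, w)
    · obtain ⟨x, hux, hne⟩ := hother u
      refine ⟨inr ⟨s(u, x), hux⟩, by simp [Subtype.ext_iff, hne], ?_⟩
      simp only [middleGraph_adj_inr_inr, ne_eq, Subtype.ext_iff, hfe]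
      exact ⟨Ne.symm hne, u, Sym2.mem_mk_left u w, Sym2.mem_mk_left u x⟩
    · have hab : G.Adj a b := hf
      have : (a ≠ u ∧ a ≠ w) ∨ (b ≠ u ∧ b ≠ w) := by
        by_contra! h
        apply hfe
        grind [Sym2.eq_iff, G.ne_of_adj hab, G.ne_of_adj huw]
      rcases this with ⟨hau, haw⟩ | ⟨hbu, hbw⟩
      · exact ⟨inl a, by simp [hau, haw], Sym2.mem_mk_left a b⟩
      · exact ⟨inl b, by simp [hbu, hbw], Sym2.mem_mk_right a b⟩

theorem tocDomNum_middleGraph_add_three_le [Finite V] {u w : V} (huw : G.Adj u w)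
    (hother : ∀ v, ∃ x, G.Adj v x ∧ s(v, x) ≠ s(u, w)) :
    tocDomNum (middleGraph G) + 3 ≤ Nat.card (V ⊕ G.edgeSet) := by
  set X : Set (V ⊕ G.edgeSet) := {inl u, inl w, inr ⟨s(u, w), huw⟩}
  have hX : X.ncard = 3 := by
    rw [Set.ncard_eq_three]
    exact ⟨_, _, _, by simpa using G.ne_of_adj huw, by simp, by simp, rfl⟩
  have hle := tocDomNum_le_ncard (H := middleGraph G) (D := Xᶜ)
    ⟨isTotalDomSet_middleGraph_compl_edge huw hother, by
      rw [compl_compl]; exact connected_induce_middleGraph_edge huw⟩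
  have := Set.ncard_add_ncard_compl X
  omega

theorem IsTotalDomSet.inr_mem_of_middleGraph {D : Set (V ⊕ G.edgeSet)}
    (hD : IsTotalDomSet (middleGraph G) D) {e : G.edgeSet} {v : V}
    (hv : ∀ x, G.Adj v x → s(v, x) = e) : inr e ∈ D := by
  obtain ⟨_ | ⟨f, hf⟩, hfD, hvf⟩ := hD (inl v)
  · exact absurd hvf middleGraph_not_adj_inl_inl
  · induction f using Sym2.ind with
    | _ a b =>
    obtain rfl | rfl := Sym2.mem_iff.1 hvf
    · rwa [show e = ⟨s(v, b), hf⟩ from Subtype.ext (hv b hf).symm]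
    · rwa [show e = ⟨s(a, v), hf⟩ from Subtype.ext ((hv a hf.symm).symm.trans Sym2.eq_swap)]

theorem IsTOCDomSet.compl_subsingleton_of_middleGraph {D : Set (V ⊕ G.edgeSet)}
    (hD : IsTOCDomSet (middleGraph G) D)
    (hleaf : ∀ u w, G.Adj u w → ∃ v, ∀ x, G.Adj v x → s(v, x) = s(u, w)) :
    Dᶜ.Subsingleton := by
  have hinr : ∀ e : G.edgeSet, inr e ∈ D := by
    rintro ⟨e, he⟩
    induction e using Sym2.ind with
    | _ u w =>
    obtain ⟨v, hv⟩ := hleaf u w he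
    exact hD.1.inr_mem_of_middleGraph hv
  have hbot : (middleGraph G).induce Dᶜ = ⊥ := by
    ext ⟨_ | e, hx⟩ ⟨_ | f, hy⟩
    · simp
    · exact absurd (hinr f) hy
    · exact absurd (hinr e) hx
    · exact absurd (hinr e) hx
  have := hD.2
  rw [hbot, connected_bot_iff] at this
  exact (Set.subsingleton_coe _).1 this.1

end middleGraph

theorem stmt9 {V : Type*} [Fintype V] (T : SimpleGraph V) (hT : T.IsTree)
    (hn : 4 ≤ Fintype.card V) :
    tocDomNum (middleGraph T) ≠ 2 * Fintype.card V - 3 := by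
  intro h
  have hcard : Nat.card (V ⊕ T.edgeSet) + 1 = 2 * Fintype.card V := by
    have hedges := (isTree_iff_connected_and_card.1 hT).2
    rw [Nat.card_sum, ← Nat.card_eq_fintype_card]
    omega
  obtain ⟨D, hD, hDcard⟩ :=
    exists_isTOCDomSet_ncard_eq_tocDomNum (H := middleGraph T) (by omega)
  have hDc : Dᶜ.ncard = 2 := by
    have := Set.ncard_add_ncard_compl D
    omega
  by_cases hinternal : ∃ u w, ∃ huw : T.Adj u w, ∀ v, ∃ x, T.Adj v x ∧ s(v, x) ≠ s(u, w)
  · obtain ⟨u, w, huw, hother⟩ := hinternal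
    have := tocDomNum_middleGraph_add_three_le huw hother
    omega
  · push Not at hinternal
    have := Set.ncard_le_one_iff_subsingleton.2 (hD.compl_subsingleton_of_middleGraph hinternal)
    omega
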